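/- Let F = (F₁,F₂) be a homogeneous polynomial force of degree k−1 in two variables satisfying the genericity conditions A.1 and A.2 with l simple Darboux points (1 ≤ l ≤ k), all in the affine chart. If Λ₁,…,Λ_l are the nontrivial Kovalevskaya exponents at these points, then Σ_{i=1}^{l} 1/Λᵢ = −1. -/

import Mathlib

open MvPolynomial

/-- Dehomogenization `F(q₁,q₂) ↦ F(1,z)` of a polynomial in two variables. -/
noncomputable def toAff (F : MvPolynomial (Fin 2) ℂ) : Polynomial ℂ :=
  MvPolynomial.aeval (fun j : Fin 2 => if j = 0 then 1 else Polynomial.X) F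

/-- `h(z) = f₁(z) = F₁(1,z)`. -/
noncomputable def hpoly (F₁ : MvPolynomial (Fin 2) ℂ) : Polynomial ℂ := toAff F₁

/-- `g(z) = f₂(z) − z f₁(z)`. -/
noncomputable def gpoly (F₁ F₂ : MvPolynomial (Fin 2) ℂ) : Polynomial ℂ :=
  toAff F₂ - Polynomial.X * toAff F₁

lemma fin2_degree (m : Fin 2 →₀ ℕ) : m.degree = m 0 + m 1 := by
  rw [Finsupp.degree_apply, Finset.sum_subset (Finset.subset_univ _)
    (fun i _ hi => Finsupp.notMem_support_iff.mp hi), Fin.sum_univ_two]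

lemma toAff_eq_sum (F : MvPolynomial (Fin 2) ℂ) :
    toAff F = ∑ m ∈ F.support, Polynomial.C (MvPolynomial.coeff m F) * Polynomial.X ^ (m 1) := by
  conv_lhs => rw [F.as_sum]
  rw [toAff, map_sum]
  refine Finset.sum_congr rfl fun m _ => ?_
  rw [MvPolynomial.aeval_monomial, Finsupp.prod_fintype _ _ (fun i => pow_zero _)]
  simp [Fin.prod_univ_two, Polynomial.algebraMap_eq]

lemma toAff_coeff_eq_zero {F : MvPolynomial (Fin 2) ℂ} {d : ℕ} (hF : F.IsHomogeneous d)
    {n : ℕ} (hn : d < n) : (toAff F).coeff n = 0 := by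
  rw [toAff_eq_sum, Polynomial.finset_sum_coeff]
  refine Finset.sum_eq_zero fun m hm => ?_
  rw [Polynomial.coeff_C_mul, Polynomial.coeff_X_pow, if_neg, mul_zero]
  intro he
  have hdeg : m.degree = d := by
    rw [Finsupp.degree_eq_weight_one]; exact hF (MvPolynomial.mem_support_iff.mp hm)
  rw [fin2_degree] at hdeg
  omega

lemma toAff_natDegree_le {F : MvPolynomial (Fin 2) ℂ} {d : ℕ} (hF : F.IsHomogeneous d) :
    (toAff F).natDegree ≤ d :=
  Polynomial.natDegree_le_iff_coeff_eq_zero.mpr fun _ hn => toAff_coeff_eq_zero hF hn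

lemma toAff_coeff_top {F : MvPolynomial (Fin 2) ℂ} {d : ℕ} (hF : F.IsHomogeneous d) :
    (toAff F).coeff d = MvPolynomial.coeff (Finsupp.single 1 d) F := by
  rw [toAff_eq_sum, Polynomial.finset_sum_coeff]
  rw [Finset.sum_eq_single (Finsupp.single (1 : Fin 2) d)]
  · simp [Polynomial.coeff_C_mul, Polynomial.coeff_X_pow]
  · intro m hm hne
    rw [Polynomial.coeff_C_mul, Polynomial.coeff_X_pow, if_neg, mul_zero]
    intro he
    have hdeg : m.degree = d := by
      rw [Finsupp.degree_eq_weight_one]; exact hF (MvPolynomial.mem_support_iff.mp hm)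
    rw [fin2_degree] at hdeg
    apply hne
    ext i
    fin_cases i <;> simp [Finsupp.single_apply] <;> omega
  · intro hns
    rw [MvPolynomial.notMem_support_iff.mp hns, map_zero, zero_mul, Polynomial.coeff_zero]

open Polynomial Lagrange in
lemma lag_sum {l : ℕ} (v : Fin (l + 1) → ℂ) (hv : Function.Injective v) (H : Polynomial ℂ)
    (hd : H.degree < ((l + 1 : ℕ) : WithBot ℕ)) :
    ∑ i, H.eval (v i) / (Polynomial.derivative (nodal Finset.univ v)).eval (v i)
      = H.coeff l := by
  have hvs : Set.InjOn v (Finset.univ : Finset (Fin (l + 1))) := fun a _ b _ h => hv h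
  have hH : H = interpolate Finset.univ v (fun i => H.eval (v i)) :=
    eq_interpolate hvs (by simpa using hd)
  have hcoeff : ∀ i : Fin (l + 1),
      (Lagrange.basis Finset.univ v i).coeff l = nodalWeight Finset.univ v i := by
    intro i
    rw [basis_eq_prod_sub_inv_mul_nodal_div (Finset.mem_univ i),
      ← nodal_erase_eq_nodal_div (Finset.mem_univ i), Polynomial.coeff_C_mul]
    have hmonic : (nodal ((Finset.univ : Finset (Fin (l + 1))).erase i) v).Monic := nodal_monic
    have hnd : (nodal ((Finset.univ : Finset (Fin (l + 1))).erase i) v).natDegree = l := by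
      rw [natDegree_nodal, Finset.card_erase_of_mem (Finset.mem_univ i)]
      simp
    have h1 := hmonic.coeff_natDegree
    rw [hnd] at h1
    rw [h1, mul_one]
  conv_rhs => rw [hH]
  rw [interpolate_apply, Polynomial.finset_sum_coeff]
  refine Finset.sum_congr rfl fun i _ => ?_
  rw [Polynomial.coeff_C_mul, hcoeff i, nodalWeight_eq_eval_derivative_nodal (Finset.mem_univ i),
    div_eq_mul_inv]

open Polynomial Lagrange in
/-- Theorem on the sum of inverse nontrivial Kovalevskaya exponents: for a
homogeneous force `F = (F₁,F₂)` of degree `k−1` with `l` simple Darboux points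
`z₁,…,z_l` (condition A.1), all in the affine chart (`deg_{q₂}F₁ = k−1`), and
satisfying condition A.2 (at a common root `s` of `g` and `h`, the multiplicity
of `s` in `g` does not exceed that in `h`), the nontrivial Kovalevskaya
exponents `Λᵢ = g'(zᵢ)/h(zᵢ)` satisfy `Σ 1/Λᵢ = −1`. -/
theorem stmt_11 (k l : ℕ) (hk : 3 ≤ k) (hl1 : 1 ≤ l) (hlk : l ≤ k)
    (F₁ F₂ : MvPolynomial (Fin 2) ℂ)
    (hh1 : F₁.IsHomogeneous (k - 1)) (hh2 : F₂.IsHomogeneous (k - 1))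
    (haff : MvPolynomial.coeff (Finsupp.single (1 : Fin 2) (k - 1)) F₁ ≠ 0)
    (z : Fin l → ℂ) (hinj : Function.Injective z)
    (hroot : ∀ i, (gpoly F₁ F₂).eval (z i) = 0)
    (hsimple : ∀ i, ((gpoly F₁ F₂).derivative).eval (z i) ≠ 0)
    (hnv : ∀ i, (hpoly F₁).eval (z i) ≠ 0)
    (hall : ∀ w : ℂ, (gpoly F₁ F₂).eval w = 0 → (hpoly F₁).eval w ≠ 0 →
      ∃ i, z i = w)
    (hA2 : ∀ s : ℂ, (gpoly F₁ F₂).eval s = 0 → (hpoly F₁).eval s = 0 →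
      Polynomial.rootMultiplicity s (gpoly F₁ F₂)
        ≤ Polynomial.rootMultiplicity s (hpoly F₁)) :
    ∑ i, (hpoly F₁).eval (z i) / ((gpoly F₁ F₂).derivative).eval (z i) = -1 := by
  classical
  obtain ⟨l', rfl⟩ : ∃ l', l = l' + 1 := ⟨l - 1, by omega⟩
  obtain ⟨k', rfl⟩ : ∃ k', k = k' + 1 := ⟨k - 1, by omega⟩
  simp only [Nat.add_sub_cancel] at hh1 hh2 haff
  set c : ℂ := MvPolynomial.coeff (Finsupp.single (1 : Fin 2) k') F₁ with hc
  set h : Polynomial ℂ := hpoly F₁ with hhdef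
  set g : Polynomial ℂ := gpoly F₁ F₂ with hgdef
  have hpe : toAff F₁ = h := rfl
  -- facts about h
  have hhtop : h.coeff k' = c := toAff_coeff_top hh1
  have hh0 : h ≠ 0 := fun h0 => haff (by rw [← hhtop, h0, Polynomial.coeff_zero])
  have hhdeg : h.natDegree = k' :=
    le_antisymm (toAff_natDegree_le hh1) (Polynomial.le_natDegree_of_ne_zero (hhtop ▸ haff))
  have hhlead : h.leadingCoeff = c := by rw [Polynomial.leadingCoeff, hhdeg, hhtop]
  -- facts about g
  have hgtop : g.coeff (k' + 1) = -c := by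
    rw [hgdef, gpoly, hpe, Polynomial.coeff_sub, Polynomial.coeff_X_mul, hhtop,
      toAff_coeff_eq_zero hh2 (Nat.lt_succ_self k'), zero_sub]
  have hgc : ∀ n, k' + 1 < n → g.coeff n = 0 := by
    intro n hn
    obtain ⟨m, rfl⟩ : ∃ m, n = m + 1 := ⟨n - 1, by omega⟩
    rw [hgdef, gpoly, hpe, Polynomial.coeff_sub, Polynomial.coeff_X_mul,
      toAff_coeff_eq_zero hh2 (by omega),
      Polynomial.coeff_eq_zero_of_natDegree_lt (lt_of_eq_of_lt hhdeg (by omega)), sub_zero]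
  have hg0 : g ≠ 0 := fun h0 =>
    haff (by rwa [h0, Polynomial.coeff_zero, eq_comm, neg_eq_zero] at hgtop)
  have hgdeg : g.natDegree = k' + 1 :=
    le_antisymm (Polynomial.natDegree_le_iff_coeff_eq_zero.mpr hgc)
      (Polynomial.le_natDegree_of_ne_zero (hgtop ▸ neg_ne_zero.mpr haff))
  have hglead : g.leadingCoeff = -c := by rw [Polynomial.leadingCoeff, hgdeg, hgtop]
  -- the nodal polynomial A
  set A : Polynomial ℂ := nodal Finset.univ z with hA
  have hAmonic : A.Monic := nodal_monic
  have hAdeg : A.natDegree = l' + 1 := by rw [hA, natDegree_nodal]; simp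
  have hAdvd : A ∣ g := by
    rw [hA, nodal]
    exact Fintype.prod_dvd_of_coprime (Polynomial.pairwise_coprime_X_sub_C hinj)
      (fun i => Polynomial.dvd_iff_isRoot.mpr (hroot i))
  obtain ⟨B, hgB⟩ := hAdvd
  have hB0 : B ≠ 0 := fun h0 => hg0 (by rw [hgB, h0, mul_zero])
  have hBg : B ∣ g := ⟨A, by rw [hgB, mul_comm]⟩
  -- every root of B is a root of h
  have hBroot : ∀ s : ℂ, B.eval s = 0 → h.eval s = 0 := by
    intro s hs
    by_contra hhs
    have hgs : g.eval s = 0 := by rw [hgB, Polynomial.eval_mul, hs, mul_zero]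
    obtain ⟨i, rfl⟩ := hall s hgs hhs
    have h1 : (Polynomial.X - Polynomial.C (z i)) ∣ B := Polynomial.dvd_iff_isRoot.mpr hs
    have h2 : (Polynomial.X - Polynomial.C (z i)) ∣ A := X_sub_C_dvd_nodal z (Finset.mem_univ i)
    obtain ⟨q, hq⟩ : (Polynomial.X - Polynomial.C (z i)) ^ 2 ∣ g := by
      rw [hgB, sq]; exact mul_dvd_mul h2 h1
    apply hsimple i
    rw [hq]
    simp [Polynomial.derivative_mul, Polynomial.derivative_pow, Polynomial.eval_mul,
      Polynomial.eval_add, Polynomial.eval_pow, Polynomial.eval_sub, Polynomial.eval_X,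
      Polynomial.eval_C, sub_self]
  -- B divides h
  have hBh : B ∣ h := by
    refine Polynomial.Splits.dvd_of_roots_le_roots (IsAlgClosed.splits B) hB0 ?_
    rw [Multiset.le_iff_count]
    intro a
    rw [Polynomial.count_roots, Polynomial.count_roots]
    rcases eq_or_ne (B.eval a) 0 with hba | hba
    · have hha : h.eval a = 0 := hBroot a hba
      have hga : g.eval a = 0 := by rw [hgB, Polynomial.eval_mul, hba, mul_zero]
      refine le_trans ?_ (hA2 a hga hha)
      exact (Polynomial.le_rootMultiplicity_iff hg0).mpr
        ((Polynomial.pow_rootMultiplicity_dvd B a).trans hBg)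
    · rw [Polynomial.rootMultiplicity_eq_zero hba]; exact Nat.zero_le _
  obtain ⟨H, hhH⟩ := hBh
  have hH0 : H ≠ 0 := fun h0 => hh0 (by rw [hhH, h0, mul_zero])
  -- degrees
  have e1 := Polynomial.natDegree_mul hAmonic.ne_zero hB0
  rw [← hgB, hgdeg, hAdeg] at e1
  have e2 := Polynomial.natDegree_mul hB0 hH0
  rw [← hhH, hhdeg] at e2
  have hHdeg : H.natDegree = l' := by omega
  -- leading coefficients
  have hBlead : B.leadingCoeff = -c := by
    have hlc := Polynomial.leadingCoeff_mul A B
    rw [← hgB, hglead, hAmonic.leadingCoeff, one_mul] at hlc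
    exact hlc.symm
  have hHlead : H.leadingCoeff = -1 := by
    have hlc := Polynomial.leadingCoeff_mul B H
    rw [← hhH, hhlead, hBlead] at hlc
    have h2 : (-c) * (-1 : ℂ) = (-c) * H.leadingCoeff := by rw [← hlc]; ring
    exact (mul_left_cancel₀ (neg_ne_zero.mpr haff) h2).symm
  have hHcoeff : H.coeff l' = -1 := by
    rw [← hHdeg, Polynomial.coeff_natDegree, hHlead]
  -- termwise identity
  have hterm : ∀ i, h.eval (z i) / (Polynomial.derivative g).eval (z i)
      = H.eval (z i) / (Polynomial.derivative A).eval (z i) := by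
    intro i
    have hAz : A.eval (z i) = 0 := eval_nodal_at_node (Finset.mem_univ i)
    have hg' : (Polynomial.derivative g).eval (z i)
        = (Polynomial.derivative A).eval (z i) * B.eval (z i) := by
      rw [hgB, Polynomial.derivative_mul]
      simp [hAz]
    have hBz : B.eval (z i) ≠ 0 := by
      intro h0
      exact hsimple i (by rw [hg', h0, mul_zero])
    have hhz : h.eval (z i) = B.eval (z i) * H.eval (z i) := by
      rw [hhH, Polynomial.eval_mul]
    rw [hg', hhz, mul_comm ((Polynomial.derivative A).eval (z i)) (B.eval (z i)),
      mul_div_mul_left _ _ hBz]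
  calc ∑ i, h.eval (z i) / (Polynomial.derivative g).eval (z i)
      = ∑ i, H.eval (z i) / (Polynomial.derivative A).eval (z i) :=
        Finset.sum_congr rfl (fun i _ => hterm i)
    _ = H.coeff l' := lag_sum z hinj H
        (lt_of_le_of_lt Polynomial.degree_le_natDegree
          (by rw [hHdeg]; exact_mod_cast Nat.lt_succ_self l'))
    _ = -1 := hHcoeff
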